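/- arXiv:math/0210295 — 3 statements merged into one kernel-verified Lean document; each statement's English description precedes it below -/
import Mathlib

section
/- For every n ≥ 1, n · det C₀⁽ⁿ⁾ = det C₁⁽ⁿ⁻¹⁾, where C₀⁽ⁿ⁾ is the n×n matrix with entries (i+j)!/(i! j!) for i,j = 0,…,n-1, and C₁⁽ⁿ⁻¹⁾ is the (n-1)×(n-1) matrix with entries (i+j)!/(i! j!) for i,j = 1,…,n-1 (with the convention that the empty determinant for n = 1 equals 1). -/
/-!
Vandermonde's identity `∑ₖ C(i,k) C(j,k) = C(i+j,i)` factors `C₀ = P Pᵀ` with `P = (C(i,k))` the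
lower unitriangular Pascal matrix, so `det C₀ = 1`. Splitting off the `k = 0` term of the same
identity gives `C₁ = P₁ P₁ᵀ + 𝟙 𝟙ᵀ` with `P₁ = (C(i+1,k+1))`, again unitriangular. Since `P₁` sends
the alternating vector `u = ((-1)ᵏ)` to `𝟙`, this is `C₁ = P₁ (1 + u uᵀ) P₁ᵀ`, and the matrix
determinant lemma gives `det C₁ = 1 + u ⬝ᵥ u = n`.
-/

open Matrix Finset

theorem Nat.sum_range_choose_mul_choose_of_lt {i N : ℕ} (j : ℕ) (h : i < N) :
    ∑ k ∈ range N, i.choose k * j.choose k = (i + j).choose i := by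
  rw [← sum_subset (range_subset_range.2 h) fun k _ hk => by
      rw [Nat.choose_eq_zero_of_lt (by simpa using hk), zero_mul],
    Nat.add_choose_eq, ← Nat.sum_antidiagonal_swap]
  simp only [Prod.fst_swap, Prod.snd_swap]
  rw [Nat.sum_antidiagonal_eq_sum_range_succ (fun a b => i.choose b * j.choose a)]
  refine sum_congr rfl fun k hk => ?_
  rw [Nat.choose_symm (by simpa [Nat.lt_succ_iff] using hk)]

theorem sum_range_neg_one_pow_mul_choose_succ_succ (R : Type*) [Ring R] {i N : ℕ} (h : i < N) :
    ∑ k ∈ range N, (-1 : R) ^ k * (i + 1).choose (k + 1) = 1 := by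
  have key := Int.alternating_sum_range_choose_eq_choose (n := i) (m := N)
  rw [Nat.choose_eq_zero_of_lt h, sum_range_succ'] at key
  simp only [pow_succ, mul_neg_one, neg_mul, sum_neg_distrib, pow_zero, Nat.choose_zero_right,
    Nat.cast_zero, Nat.cast_one, mul_zero, mul_one] at key
  have hℤ : ∑ k ∈ range N, (-1 : ℤ) ^ k * (i + 1).choose (k + 1) = 1 := by linear_combination -key
  exact_mod_cast congrArg (Int.cast : ℤ → R) hℤ

namespace Matrix

variable (R : Type*) [CommRing R] (s n : ℕ)

/-- The paper's `Cₛ⁽ⁿ⁾`, with indices shifted to start at `0`. -/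
def binomialMatrix : Matrix (Fin n) (Fin n) R :=
  of fun i j => ((((i : ℕ) + s) + ((j : ℕ) + s)).choose ((i : ℕ) + s) : R)

def shiftedPascal : Matrix (Fin n) (Fin n) R :=
  of fun i k => (((i : ℕ) + s).choose ((k : ℕ) + s) : R)

theorem shiftedPascal_isLowerTriangular : (shiftedPascal R s n).IsLowerTriangular := by
  intro i k hik
  have : (i : ℕ) + s < (k : ℕ) + s := Nat.add_lt_add_right (show (i : ℕ) < k from hik) s
  simp [shiftedPascal, Nat.choose_eq_zero_of_lt this]

theorem det_shiftedPascal : (shiftedPascal R s n).det = 1 := by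
  rw [det_of_isLowerTriangular _ (shiftedPascal_isLowerTriangular R s n)]
  simp [shiftedPascal]

theorem shiftedPascal_zero_mul_transpose :
    shiftedPascal R 0 n * (shiftedPascal R 0 n)ᵀ = binomialMatrix R 0 n := by
  ext i j
  simp only [mul_apply, transpose_apply, shiftedPascal, binomialMatrix, of_apply, add_zero]
  rw [Fin.sum_univ_eq_sum_range (fun k => ((i : ℕ).choose k : R) * ((j : ℕ).choose k)),
    ← Nat.sum_range_choose_mul_choose_of_lt j i.isLt]
  push_cast
  rfl

theorem shiftedPascal_one_mul_transpose_add :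
    shiftedPascal R 1 n * (shiftedPascal R 1 n)ᵀ + vecMulVec 1 1 = binomialMatrix R 1 n := by
  ext i j
  simp only [add_apply, mul_apply, transpose_apply, vecMulVec_apply, shiftedPascal, binomialMatrix,
    of_apply, Pi.one_apply, mul_one]
  rw [Fin.sum_univ_eq_sum_range
      (fun k => (((i : ℕ) + 1).choose (k + 1) : R) * (((j : ℕ) + 1).choose (k + 1))),
    ← Nat.sum_range_choose_mul_choose_of_lt ((j : ℕ) + 1) (Nat.succ_lt_succ i.isLt),
    sum_range_succ' _ n]
  push_cast
  simp

theorem shiftedPascal_one_mulVec_neg_one_pow :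
    shiftedPascal R 1 n *ᵥ (fun k => (-1 : R) ^ (k : ℕ)) = 1 := by
  ext i
  simp only [mulVec, dotProduct, shiftedPascal, of_apply, Pi.one_apply]
  rw [Fin.sum_univ_eq_sum_range (fun k => (((i : ℕ) + 1).choose (k + 1) : R) * (-1) ^ k)]
  exact (sum_congr rfl fun k _ => mul_comm _ _).trans
    (sum_range_neg_one_pow_mul_choose_succ_succ R i.isLt)

theorem binomialMatrix_one_eq :
    binomialMatrix R 1 n = shiftedPascal R 1 n *
      (1 + vecMulVec (fun k : Fin n => (-1 : R) ^ (k : ℕ)) (fun k : Fin n => (-1) ^ (k : ℕ))) *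
        (shiftedPascal R 1 n)ᵀ := by
  rw [mul_add, mul_one, add_mul, mul_vecMulVec, vecMulVec_mul, vecMul_transpose,
    shiftedPascal_one_mulVec_neg_one_pow, shiftedPascal_one_mul_transpose_add]

theorem det_binomialMatrix_zero : (binomialMatrix R 0 n).det = 1 := by
  rw [← shiftedPascal_zero_mul_transpose, det_mul, det_transpose, det_shiftedPascal, mul_one]

theorem det_binomialMatrix_one : (binomialMatrix R 1 n).det = n + 1 := by
  rw [binomialMatrix_one_eq, det_mul, det_mul, det_transpose, det_shiftedPascal, vecMulVec_eq Unit,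
    det_one_add_replicateCol_mul_replicateRow]
  simp [dotProduct, ← pow_add, ← two_mul, pow_mul, add_comm]

end Matrix

/-- `n · det C₀⁽ⁿ⁾ = det C₁⁽ⁿ⁻¹⁾`, where `C₀⁽ⁿ⁾` is the `n×n` matrix with entries
`(i+j)!/(i!j!) = binom(i+j,i)` for `i,j = 0,…,n-1` and `C₁⁽ⁿ⁻¹⁾` the `(n-1)×(n-1)`
matrix with the same entries for `i,j = 1,…,n-1`. -/
theorem stmt_8 (n : ℕ) (hn : 1 ≤ n) :
    (n : ℚ) * Matrix.det (Matrix.of fun i j : Fin n =>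
        ((Nat.choose ((i : ℕ) + (j : ℕ)) (i : ℕ) : ℚ))) =
      Matrix.det (Matrix.of fun i j : Fin (n - 1) =>
        ((Nat.choose (((i : ℕ) + 1) + ((j : ℕ) + 1)) ((i : ℕ) + 1) : ℚ))) := by
  obtain ⟨m, rfl⟩ := Nat.exists_eq_add_of_le' hn
  change ((m + 1 : ℕ) : ℚ) * (binomialMatrix ℚ 0 (m + 1)).det = (binomialMatrix ℚ 1 m).det
  rw [det_binomialMatrix_zero, det_binomialMatrix_one]
  push_cast
  ring
end

section
/- Viewing the (0,0) entry c of the n×n matrix C⁽ⁿ⁾(c) (whose other entries equal (i+j)!/(i! j! (2p₀)^{i+j+1}), and whose (0,0) entry is c) as a parameter, one has d/dc [det C⁽ⁿ⁾(c)] evaluated at c = (2p₀)^{-1} equals 2p₀ n · det C⁽ⁿ⁾((2p₀)^{-1}). -/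
open Matrix

section Stmt11Aux
open Finset


private lemma vand (i j : ℕ) :
    ((i+j).choose i) = ∑ k ∈ Finset.range (i+1), i.choose k * j.choose k := by
  rw [Nat.add_choose_eq, Finset.Nat.sum_antidiagonal_eq_sum_range_succ_mk,
    ← Finset.sum_range_reflect]
  refine Finset.sum_congr rfl fun k hk => ?_
  rw [Finset.mem_range, Nat.lt_succ_iff] at hk
  simp only [Nat.succ_sub_one]
  rw [Nat.choose_symm hk, Nat.sub_sub_self hk]

private lemma vandR {N i j : ℕ} (hi : i < N) :
    ∑ k ∈ Finset.range N, (i.choose k : ℝ) * j.choose k = ((i+j).choose i : ℝ) := by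
  rw [← Finset.sum_subset (Finset.range_subset_range.2 hi)]
  · rw [vand i j]; push_cast; rfl
  · intro k _ hk
    rw [Finset.mem_range, not_lt, Nat.succ_le_iff] at hk
    simp [Nat.choose_eq_zero_of_lt hk]

private lemma detP (N : ℕ) :
    (Matrix.of fun i j : Fin N => ((((i:ℕ)+(j:ℕ)).choose i : ℕ) : ℝ)).det = 1 := by
  set B : Matrix (Fin N) (Fin N) ℝ := Matrix.of fun i k => ((i:ℕ).choose k : ℝ) with hB
  have hfac : (Matrix.of fun i j : Fin N => ((((i:ℕ)+(j:ℕ)).choose i : ℕ) : ℝ)) = B * Bᵀ := by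
    ext i j
    simp only [Matrix.mul_apply, Matrix.transpose_apply, hB, Matrix.of_apply]
    rw [Fin.sum_univ_eq_sum_range (fun k => ((i:ℕ).choose k : ℝ) * ((j:ℕ).choose k : ℝ))]
    exact (vandR i.isLt).symm
  have htri : B.BlockTriangular OrderDual.toDual := by
    intro i j hij
    simp only [hB, Matrix.of_apply]
    have : (i:ℕ) < (j:ℕ) := hij
    rw [Nat.choose_eq_zero_of_lt this, Nat.cast_zero]
  have hdetB : B.det = 1 := by
    rw [Matrix.det_of_lowerTriangular B htri]
    simp [hB]
  rw [hfac, Matrix.det_mul, Matrix.det_transpose, hdetB]; norm_num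

private lemma sumLL {m i j : ℕ} (hi : i < m) :
    ∑ k ∈ Finset.range m, ((i+1).choose (k+1) : ℝ) * ((j+1).choose (k+1) : ℝ)
      = ((i+j+2).choose (i+1) : ℝ) - 1 := by
  have h := vandR (N := m+1) (i := i+1) (j := j+1) (by omega)
  rw [Finset.sum_range_succ'] at h
  simp only [Nat.choose_zero_right, Nat.cast_one, mul_one] at h
  have he : (i+1) + (j+1) = i+j+2 := by omega
  rw [he] at h
  linarith

private lemma sumAlt {m i : ℕ} (hi : i < m) :
    ∑ k ∈ Finset.range m, (-1:ℝ)^k * ((i+1).choose (k+1) : ℝ) = 1 := by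
  rw [← Finset.sum_subset (Finset.range_subset_range.2 (show i+1 ≤ m by omega))]
  · have h0 : ∑ t ∈ Finset.range (i+2), (-1:ℝ)^t * ((i+1).choose t : ℝ) = 0 := by
      have := Int.alternating_sum_range_choose_of_ne (n := i+1) (by omega)
      exact_mod_cast congrArg (fun z : ℤ => (z : ℝ)) this
    rw [show i+2 = (i+1)+1 from rfl, Finset.sum_range_succ'] at h0
    simp only [pow_succ, pow_zero, Nat.choose_zero_right, Nat.cast_one, one_mul, mul_one] at h0
    have : ∑ k ∈ Finset.range (i+1), (-1:ℝ)^k * (-1) * ((i+1).choose (k+1) : ℝ) = -1 := by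
      linarith
    calc ∑ k ∈ Finset.range (i+1), (-1:ℝ)^k * ((i+1).choose (k+1) : ℝ)
        = -∑ k ∈ Finset.range (i+1), (-1:ℝ)^k * (-1) * ((i+1).choose (k+1) : ℝ) := by
          rw [← Finset.sum_neg_distrib]; exact Finset.sum_congr rfl fun k _ => by ring
      _ = 1 := by rw [this]; ring
  · intro k _ hk
    rw [Finset.mem_range, not_lt] at hk
    rw [Nat.choose_eq_zero_of_lt (by omega), Nat.cast_zero, mul_zero]

private lemma detQ (m : ℕ) :
    (Matrix.of fun i j : Fin m => ((((i:ℕ)+(j:ℕ)+2).choose ((i:ℕ)+1) : ℕ) : ℝ)).det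
      = (m : ℝ) + 1 := by
  set L : Matrix (Fin m) (Fin m) ℝ :=
    Matrix.of fun i k : Fin m => ((((i:ℕ)+1).choose ((k:ℕ)+1) : ℕ) : ℝ) with hL
  set w : Fin m → ℝ := fun k => (-1)^(k:ℕ) with hw
  set C1 : Matrix (Fin m) (Fin m) ℝ := 1 + Matrix.replicateCol Unit w * Matrix.replicateRow Unit w with hC1
  have hLw : ∀ i : Fin m, ∑ t, L i t * w t = 1 := by
    intro i
    simp only [hL, hw, Matrix.of_apply]
    rw [Fin.sum_univ_eq_sum_range (fun t => ((((i:ℕ)+1).choose (t+1) : ℕ) : ℝ) * (-1)^t)]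
    exact (Finset.sum_congr rfl fun k _ => by ring).trans (sumAlt (m := m) (i := (i:ℕ)) i.isLt)
  have h1 : ∀ i k : Fin m, (L * C1) i k = L i k + w k := by
    intro i k
    rw [hC1, Matrix.mul_add, Matrix.mul_one, Matrix.add_apply, ← Matrix.mul_assoc]
    congr 1
    rw [Matrix.mul_apply]
    simp only [Matrix.mul_apply, Matrix.replicateCol_apply, Matrix.replicateRow_apply, Finset.univ_unique,
      Finset.sum_singleton]
    rw [hLw i, one_mul]
  have hfac : (Matrix.of fun i j : Fin m => ((((i:ℕ)+(j:ℕ)+2).choose ((i:ℕ)+1) : ℕ) : ℝ))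
      = L * C1 * Lᵀ := by
    ext i j
    rw [Matrix.mul_apply]
    simp only [h1, Matrix.transpose_apply, add_mul]
    rw [Finset.sum_add_distrib]
    have e1 : ∑ k, L i k * L j k = (((i:ℕ)+(j:ℕ)+2).choose ((i:ℕ)+1) : ℝ) - 1 := by
      simp only [hL, Matrix.of_apply]
      rw [Fin.sum_univ_eq_sum_range (fun k => ((((i:ℕ)+1).choose (k+1) : ℕ) : ℝ) *
        ((((j:ℕ)+1).choose (k+1) : ℕ) : ℝ))]
      exact sumLL i.isLt
    have e2 : ∑ k, w k * L j k = 1 := by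
      simp only [hL, hw, Matrix.of_apply]
      rw [Fin.sum_univ_eq_sum_range (fun k => (-1:ℝ)^k * ((((j:ℕ)+1).choose (k+1) : ℕ) : ℝ))]
      exact sumAlt j.isLt
    rw [e1, e2, Matrix.of_apply]; ring
  have hdetL : L.det = 1 := by
    have htri : L.BlockTriangular OrderDual.toDual := by
      intro i j hij
      have hlt : ((i:ℕ)+1) < ((j:ℕ)+1) := by
        have : (i:ℕ) < (j:ℕ) := hij
        omega
      simp only [hL, Matrix.of_apply]
      rw [Nat.choose_eq_zero_of_lt hlt, Nat.cast_zero]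
    rw [Matrix.det_of_lowerTriangular L htri]
    simp [hL]
  rw [hfac, Matrix.det_mul, Matrix.det_mul, Matrix.det_transpose, hdetL, hC1,
    Matrix.det_one_add_replicateCol_mul_replicateRow]
  simp only [dotProduct, hw]
  have hsq : ∀ k : Fin m, (-1:ℝ)^(k:ℕ) * (-1)^(k:ℕ) = 1 := fun k => by
    rw [← pow_add]; exact Even.neg_one_pow ⟨(k:ℕ), rfl⟩
  rw [Finset.sum_congr rfl fun k _ => hsq k]
  simp [Finset.card_univ]
  ring

private lemma detScale {N : ℕ} (r : ℝ) (a b : Fin N → ℕ) (B : Matrix (Fin N) (Fin N) ℝ) :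
    (Matrix.of fun i j : Fin N => B i j * r^(a i) * r^(b j)).det
      = (∏ i : Fin N, r^(a i)) * (∏ j : Fin N, r^(b j)) * B.det := by
  have hfac : (Matrix.of fun i j : Fin N => B i j * r^(a i) * r^(b j))
      = Matrix.diagonal (fun i => r^(a i)) * B * Matrix.diagonal (fun j => r^(b j)) := by
    ext i j
    rw [Matrix.mul_apply]
    simp only [Matrix.diagonal_mul, Matrix.mul_diagonal, Matrix.of_apply]
    rw [Finset.sum_eq_single j]
    · rw [Matrix.diagonal_apply_eq]; ring
    · intro k _ hk; simp [Matrix.diagonal_apply_ne _ hk]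
    · intro h; exact absurd (Finset.mem_univ j) h
  rw [hfac, Matrix.det_mul, Matrix.det_mul, Matrix.det_diagonal, Matrix.det_diagonal]
  ring

end Stmt11Aux

/-- Viewing the `(0,0)` entry `c` of `C⁽ⁿ⁾(c)` as a parameter (other entries equal
`(i+j)!/(i!j!(2p₀)^{i+j+1})`), the derivative of `det C⁽ⁿ⁾(c)` at `c = (2p₀)⁻¹`
equals `2p₀ n · det C⁽ⁿ⁾((2p₀)⁻¹)`. -/
theorem stmt_11 (n : ℕ) (hn : 0 < n) (p₀ : ℝ) (hp₀ : 0 < p₀)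
    (M : ℝ → Matrix (Fin n) (Fin n) ℝ)
    (hM : ∀ c, M c = Matrix.of fun i j : Fin n =>
      if (i : ℕ) = 0 ∧ (j : ℕ) = 0 then c
      else (Nat.factorial ((i : ℕ) + (j : ℕ)) : ℝ) /
        ((Nat.factorial (i : ℕ) : ℝ) * (Nat.factorial (j : ℕ) : ℝ) *
          (2 * p₀) ^ ((i : ℕ) + (j : ℕ) + 1))) :
    HasDerivAt (fun c => Matrix.det (M c))
      (2 * p₀ * n * Matrix.det (M ((2 * p₀)⁻¹))) ((2 * p₀)⁻¹) := by
  obtain ⟨m, rfl⟩ : ∃ m, n = m + 1 := ⟨n - 1, by omega⟩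
  set q : ℝ := 2 * p₀ with hqdef
  have hq : q ≠ 0 := by positivity
  set r : ℝ := q⁻¹ with hrdef
  set A : Matrix (Fin (m+1)) (Fin (m+1)) ℝ := M q⁻¹ with hA
  -- entry formula for A
  have hAe : ∀ i j : Fin (m+1),
      A i j = ((((i:ℕ)+(j:ℕ)).choose i : ℕ) : ℝ) * r^((i:ℕ)+1) * r^(j:ℕ) := by
    intro i j
    rw [hA, hM, Matrix.of_apply]
    by_cases h : (i:ℕ) = 0 ∧ (j:ℕ) = 0
    · rw [if_pos h, h.1, h.2]
      simp [hrdef]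
    · rw [if_neg h, Nat.cast_choose ℝ (Nat.le_add_right (i:ℕ) (j:ℕ)),
        Nat.add_sub_cancel_left, hrdef]
      have h1 : (((i:ℕ)).factorial : ℝ) ≠ 0 := Nat.cast_ne_zero.2 (Nat.factorial_ne_zero _)
      have h2 : (((j:ℕ)).factorial : ℝ) ≠ 0 := Nat.cast_ne_zero.2 (Nat.factorial_ne_zero _)
      field_simp
      rw [one_div, inv_pow, inv_pow, show (i:ℕ)+(j:ℕ)+1 = ((i:ℕ)+1)+(j:ℕ) by omega, pow_add]
      field_simp

  have hA00 : A 0 0 = q⁻¹ := by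
    rw [hA, hM, Matrix.of_apply, if_pos ⟨rfl, rfl⟩]
  -- affine dependence on c
  have hMc : ∀ c, M c = A.updateRow 0 (Function.update (A 0) 0 c) := by
    intro c
    ext i j
    rw [Matrix.updateRow_apply]
    by_cases hi : i = 0
    · subst hi
      rw [if_pos rfl]
      by_cases hj : j = 0
      · subst hj
        rw [Function.update_self, hM, Matrix.of_apply, if_pos ⟨rfl, rfl⟩]
      · rw [Function.update_of_ne hj, hA, hM c, hM q⁻¹, Matrix.of_apply, Matrix.of_apply]
        have hj' : ¬((0:ℕ) = 0 ∧ (j:ℕ) = 0) := fun hc => hj (Fin.ext hc.2)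
        rw [if_neg (fun hc => hj (Fin.ext hc.2)), if_neg (fun hc => hj (Fin.ext hc.2))]
    · rw [if_neg hi, hA, hM c, hM q⁻¹, Matrix.of_apply, Matrix.of_apply]
      have hi' : ¬((i:ℕ) = 0 ∧ (j:ℕ) = 0) := fun hc => hi (Fin.ext hc.1)
      rw [if_neg hi', if_neg hi']
  set Kdet : ℝ := (A.updateRow 0 (Pi.single 0 1)).det with hK
  have hdet : ∀ c, (M c).det = A.det + (c - q⁻¹) * Kdet := by
    intro c
    have hupd : Function.update (A 0) 0 c
        = A 0 + (c - q⁻¹) • ((Pi.single (0 : Fin (m+1)) (1:ℝ)) : Fin (m+1) → ℝ) := by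
      funext j
      by_cases hj : j = 0
      · subst hj
        simp [hA00]
      · simp [Function.update_of_ne hj, Pi.single_eq_of_ne hj]
    rw [hMc c, hupd, Matrix.det_updateRow_add, Matrix.det_updateRow_smul,
      Matrix.updateRow_eq_self, hK]
  -- derivative
  have hderiv : HasDerivAt (fun c => (M c).det) Kdet q⁻¹ := by
    have : (fun c => (M c).det) = fun c => A.det + (c - q⁻¹) * Kdet := funext hdet
    rw [this]
    simpa using (((hasDerivAt_id (q⁻¹ : ℝ)).sub_const q⁻¹).mul_const Kdet).const_add A.det
  -- compute Kdet as a minor determinant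
  have hKminor : Kdet = (A.submatrix Fin.succ Fin.succ).det := by
    rw [hK, Matrix.det_succ_row_zero]
    rw [Finset.sum_eq_single 0]
    · rw [Matrix.updateRow_self, Fin.succAbove_zero]
      have hsub : (A.updateRow 0 (Pi.single 0 1)).submatrix Fin.succ Fin.succ
          = A.submatrix Fin.succ Fin.succ := by
        ext i j
        simp [Matrix.submatrix_apply, Matrix.updateRow_ne (Fin.succ_ne_zero i)]
      rw [hsub]
      simp
    · intro j _ hj
      rw [Matrix.updateRow_self, Pi.single_eq_of_ne hj]
      ring
    · intro h; exact absurd (Finset.mem_univ 0) h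
  -- determinant of A
  have hdetA : A.det = (∏ i : Fin (m+1), r^((i:ℕ)+1)) * (∏ j : Fin (m+1), r^(j:ℕ)) := by
    have : A = Matrix.of fun i j : Fin (m+1) =>
        ((((i:ℕ)+(j:ℕ)).choose i : ℕ) : ℝ) * r^((i:ℕ)+1) * r^(j:ℕ) := by
      ext i j; exact hAe i j
    rw [this]
    have hds := detScale r (fun i => (i:ℕ)+1) (fun j => (j:ℕ))
      (Matrix.of fun i j : Fin (m+1) => ((((i:ℕ)+(j:ℕ)).choose i : ℕ) : ℝ))
    simp only [Matrix.of_apply] at hds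
    rw [hds, detP, mul_one]
  -- determinant of the minor
  have hdetMinor : (A.submatrix Fin.succ Fin.succ).det
      = (∏ i : Fin m, r^((i:ℕ)+2)) * (∏ j : Fin m, r^((j:ℕ)+1)) * ((m:ℝ)+1) := by
    have : A.submatrix Fin.succ Fin.succ = Matrix.of fun i j : Fin m =>
        ((((i:ℕ)+(j:ℕ)+2).choose ((i:ℕ)+1) : ℕ) : ℝ) * r^((i:ℕ)+2) * r^((j:ℕ)+1) := by
      ext i j
      rw [Matrix.submatrix_apply, hAe, Matrix.of_apply, Fin.val_succ, Fin.val_succ]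
      rw [show (i:ℕ)+1+((j:ℕ)+1) = (i:ℕ)+(j:ℕ)+2 by omega,
        show (i:ℕ)+1+1 = (i:ℕ)+2 by omega]
    rw [this]
    have hds := detScale r (fun i => (i:ℕ)+2) (fun j => (j:ℕ)+1)
      (Matrix.of fun i j : Fin m => ((((i:ℕ)+(j:ℕ)+2).choose ((i:ℕ)+1) : ℕ) : ℝ))
    simp only [Matrix.of_apply] at hds
    rw [hds, detQ]
  -- final identity
  have hfinal : Kdet = 2 * p₀ * ((m:ℝ)+1) * A.det := by
    rw [hKminor, hdetMinor, hdetA]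
    rw [Finset.prod_pow_eq_pow_sum, Finset.prod_pow_eq_pow_sum,
      Finset.prod_pow_eq_pow_sum, Finset.prod_pow_eq_pow_sum]
    rw [← pow_add, ← pow_add]
    have hexp : (∑ i : Fin (m+1), ((i:ℕ)+1)) + (∑ j : Fin (m+1), (j:ℕ))
        = ((∑ i : Fin m, ((i:ℕ)+2)) + (∑ j : Fin m, ((j:ℕ)+1))) + 1 := by
      rw [Fin.sum_univ_eq_sum_range (fun i => i+1), Fin.sum_univ_eq_sum_range (fun j => j),
        Fin.sum_univ_eq_sum_range (fun i => i+2), Fin.sum_univ_eq_sum_range (fun j => j+1)]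
      rw [Finset.sum_range_succ' (fun i => i+1) m, Finset.sum_range_succ' (fun j => j) m]
      have e3 : ∑ k ∈ Finset.range m, (k+1+1) = ∑ i ∈ Finset.range m, (i+2) :=
        Finset.sum_congr rfl fun k _ => by omega
      omega
    rw [hexp, pow_succ]
    rw [hrdef]
    field_simp
    ring
  convert hderiv using 1
  rw [hfinal, hqdef]
  push_cast
  ring
end

section
/- Let Γ⁽ⁿ⁾ be the n×n matrix with entries γ_{ij} = Γ((i+j+3)/2) · (1 + (-1)^{i+j})/(i+j+1) for i,j = 0,…,n-1. Then det Γ⁽ⁿ⁾ > 0 for every n ≥ 1. -/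
open Matrix

section aux
open MeasureTheory Real Set Polynomial

lemma aux_integrable (m : ℕ) :
    Integrable (fun x : ℝ => x ^ m * Real.exp (-x ^ 2)) := by
  have h := integrable_rpow_mul_exp_neg_mul_sq (b := 1) one_pos
    (s := (m : ℝ)) (neg_one_lt_zero.trans_le (Nat.cast_nonneg m))
  simpa [Real.rpow_natCast] using h

lemma aux_moment (m : ℕ) :
    ∫ x : ℝ, x ^ m * Real.exp (-x ^ 2)
      = (1 + (-1 : ℝ) ^ m) * ((1 / 2) * Real.Gamma ((m + 1) / 2)) := by
  have hIoi : ∫ x in Ioi (0 : ℝ), x ^ m * Real.exp (-x ^ 2)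
      = (1 / 2) * Real.Gamma (((m : ℝ) + 1) / 2) := by
    have h := integral_rpow_mul_exp_neg_rpow (p := 2) (q := (m : ℝ)) two_pos
      (neg_one_lt_zero.trans_le (Nat.cast_nonneg m))
    rw [← h]
    refine setIntegral_congr_fun measurableSet_Ioi (fun x hx => ?_)
    rw [Real.rpow_natCast, Real.rpow_two]
  have hint := aux_integrable m
  have hIic : ∫ x in Iic (0 : ℝ), x ^ m * Real.exp (-x ^ 2)
      = (-1 : ℝ) ^ m * ∫ x in Ioi (0 : ℝ), x ^ m * Real.exp (-x ^ 2) := by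
    have : ∫ x in Iic (0 : ℝ), x ^ m * Real.exp (-x ^ 2)
        = ∫ x in Iic (0 : ℝ), (-1 : ℝ) ^ m * ((-x) ^ m * Real.exp (-(-x) ^ 2)) := by
      refine setIntegral_congr_fun measurableSet_Iic (fun x hx => ?_)
      have : (-1 : ℝ) ^ m * (-x) ^ m = x ^ m := by
        rw [← mul_pow]; ring_nf
      rw [neg_sq, ← mul_assoc, this]
    rw [this, integral_const_mul]
    congr 1
    have := integral_comp_neg_Iic (0 : ℝ) (fun x : ℝ => x ^ m * Real.exp (-x ^ 2))
    simpa using this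
  rw [← intervalIntegral.integral_Iic_add_Ioi (b := (0:ℝ)) hint.integrableOn hint.integrableOn,
    hIic, hIoi]
  ring

lemma aux_entry (m : ℕ) :
    Real.Gamma (((m : ℝ) + 3) / 2) * (1 + (-1 : ℝ) ^ m) / ((m : ℝ) + 1)
      = ∫ x : ℝ, x ^ m * Real.exp (-x ^ 2) := by
  rw [aux_moment m]
  have h1 : ((m : ℝ) + 3) / 2 = ((m : ℝ) + 1) / 2 + 1 := by ring
  have h2 : ((m : ℝ) + 1) / 2 ≠ 0 := by positivity
  rw [h1, Real.Gamma_add_one h2]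
  have h3 : (m : ℝ) + 1 ≠ 0 := by positivity
  field_simp

lemma aux_posdef (n : ℕ) :
    (Matrix.of fun i j : Fin n =>
      ∫ x : ℝ, x ^ ((i : ℕ) + (j : ℕ)) * Real.exp (-x ^ 2)).PosDef := by
  rw [Matrix.posDef_iff_dotProduct_mulVec]
  constructor
  · ext i j
    simp only [Matrix.conjTranspose_apply, Matrix.of_apply, star_trivial]
    rw [Nat.add_comm]
  · intro v hv
    classical
    set f : ℝ → ℝ := fun x => (∑ i : Fin n, v i * x ^ (i : ℕ)) ^ 2 * Real.exp (-x ^ 2)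
      with hf
    set g : Fin n × Fin n → ℝ → ℝ := fun p x =>
      v p.1 * (x ^ ((p.1 : ℕ) + (p.2 : ℕ)) * Real.exp (-x ^ 2) * v p.2) with hg
    have hgint : ∀ p : Fin n × Fin n, Integrable (g p) :=
      fun p => (((aux_integrable _).mul_const _).const_mul _)
    have hfsum : ∀ x : ℝ, f x = ∑ p : Fin n × Fin n, g p x := by
      intro x
      rw [hf]
      simp only [hg]
      rw [Fintype.sum_prod_type, sq, Finset.sum_mul_sum, Finset.sum_mul]
      refine Finset.sum_congr rfl fun i _ => ?_
      rw [Finset.sum_mul]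
      refine Finset.sum_congr rfl fun j _ => ?_
      rw [pow_add]; ring
    have hfint : Integrable f := by
      have : f = fun x => ∑ p : Fin n × Fin n, g p x := funext hfsum
      rw [this]
      exact integrable_finset_sum _ fun p _ => hgint p
    have key : dotProduct (star v)
        ((Matrix.of fun i j : Fin n =>
          ∫ x : ℝ, x ^ ((i : ℕ) + (j : ℕ)) * Real.exp (-x ^ 2)).mulVec v)
        = ∫ x : ℝ, f x := by
      simp only [dotProduct, Matrix.mulVec, Matrix.of_apply, star_trivial,
        Pi.star_apply]
      rw [show ∫ x : ℝ, f x = ∑ p : Fin n × Fin n, ∫ x, g p x by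
        rw [← integral_finset_sum _ fun p _ => hgint p]
        exact integral_congr_ae (Filter.Eventually.of_forall hfsum)]
      rw [Fintype.sum_prod_type]
      refine Finset.sum_congr rfl fun i _ => ?_
      rw [Finset.mul_sum]
      refine Finset.sum_congr rfl fun j _ => ?_
      simp only [hg]
      rw [← integral_mul_const, ← integral_const_mul]
    rw [key]
    -- now positivity of the integral
    set P : ℝ[X] := ∑ i : Fin n, Polynomial.C (v i) * Polynomial.X ^ (i : ℕ) with hP
    have hPeval : ∀ x : ℝ, Polynomial.eval x P = ∑ i : Fin n, v i * x ^ (i : ℕ) := by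
      intro x; simp [hP, Polynomial.eval_finset_sum]
    have hPne : P ≠ 0 := by
      obtain ⟨i, hi⟩ := Function.ne_iff.1 hv
      intro h
      apply hi
      have : P.coeff (i : ℕ) = v i := by
        rw [hP, Polynomial.finset_sum_coeff]
        rw [Finset.sum_eq_single i]
        · simp
        · intro j _ hj
          simp only [Polynomial.coeff_C_mul, Polynomial.coeff_X_pow]
          rw [if_neg (by simpa [Fin.val_eq_val] using (Ne.symm hj)), mul_zero]
        · simp
      rw [h] at this
      simpa using this.symm
    have hroots : ({x : ℝ | P.IsRoot x}).Finite := P.finite_setOf_isRoot hPne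
    have hsupp : {x : ℝ | P.IsRoot x}ᶜ ⊆ Function.support f := by
      intro x hx
      simp only [mem_compl_iff, mem_setOf_eq, Polynomial.IsRoot] at hx
      rw [hPeval] at hx
      simp only [Function.mem_support, hf]
      positivity
    have hmeas : 0 < volume (Function.support f) := by
      refine lt_of_lt_of_le ?_ (measure_mono hsupp)
      have h1 : volume {x : ℝ | P.IsRoot x} = 0 := hroots.measure_zero _
      have h2 := measure_add_measure_compl (μ := volume)
        (s := {x : ℝ | P.IsRoot x}) hroots.measurableSet
      rw [h1, zero_add, Real.volume_univ] at h2
      rw [h2]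
      exact ENNReal.zero_lt_top
    exact (integral_pos_iff_support_of_nonneg
      (fun x => by rw [hf]; positivity) hfint).2 hmeas

end aux

/-- The `n×n` matrix with entries `Γ((i+j+3)/2)(1+(-1)^{i+j})/(i+j+1)` has positive
determinant for every `n ≥ 1`. -/
theorem stmt_12 (n : ℕ) (hn : 1 ≤ n) :
    0 < Matrix.det (Matrix.of fun i j : Fin n =>
      Real.Gamma ((((i : ℕ) : ℝ) + ((j : ℕ) : ℝ) + 3) / 2) *
        (1 + (-1 : ℝ) ^ ((i : ℕ) + (j : ℕ))) / (((i : ℕ) : ℝ) + ((j : ℕ) : ℝ) + 1)) := by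
  have hM : (Matrix.of fun i j : Fin n =>
      Real.Gamma ((((i : ℕ) : ℝ) + ((j : ℕ) : ℝ) + 3) / 2) *
        (1 + (-1 : ℝ) ^ ((i : ℕ) + (j : ℕ))) / (((i : ℕ) : ℝ) + ((j : ℕ) : ℝ) + 1))
      = Matrix.of fun i j : Fin n =>
        ∫ x : ℝ, x ^ ((i : ℕ) + (j : ℕ)) * Real.exp (-x ^ 2) := by
    ext i j
    simp only [Matrix.of_apply]
    rw [← aux_entry ((i : ℕ) + (j : ℕ))]
    push_cast
    ring_nf
  rw [hM]
  exact (aux_posdef n).det_pos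
end
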